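/- Let K be a field of characteristic different from 2 and let A = K[X]/(X²) with X homogeneous of degree −1 and differential determined by d(X)=1 (and d(K)=0). Then the dg-extension (K,0)→(A,d) is not dg-separable: there is no element ω of degree 0 in A⊗_K A with X·ω = ω·X and mapping to 1 under the multiplication map A⊗_K A → A. -/

import Mathlib

/-!
Write `b = b₀ + b₁ ε`. The coefficient of `ε ⊗ 1`, i.e. the additive functional
`b ⊗ b' ↦ b₁ b'₀` on `R[ε] ⊗ R[ε]`, is `R`-balanced, so it descends to
`R[ε] ⊗[R] R[ε]`, and on every `ω` it takes `ε ω - ω ε` to the constant term of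
`μ ω`. Hence `ε ω = ω ε` forces that constant term to vanish, so `μ ω ≠ 1`.
-/

open scoped TensorProduct

section DGCore

variable {A : Type} [Ring A] {B : Type} [Ring B]

/-- `(A, d)` together with the grading `𝒜` is a differential graded ring:
`d` is a square-zero additive endomorphism of degree `1` satisfying the graded
Leibniz rule. -/
structure IsDGRing (𝒜 : ℤ → AddSubgroup A) (d : A →+ A) : Prop where
  d_sq : ∀ x, d (d x) = 0
  d_mem : ∀ (i : ℤ), ∀ x ∈ 𝒜 i, d x ∈ 𝒜 (i + 1)
  leibniz : ∀ (i : ℤ) (a b : A), a ∈ 𝒜 i →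
    d (a * b) = d a * b + ((Int.negOnePow i : ℤ)) • (a * d b)

/-- A homomorphism of differential graded rings (a dg-extension). -/
structure IsDGHom (𝒜 : ℤ → AddSubgroup A) (dA : A →+ A)
    (𝒝 : ℤ → AddSubgroup B) (dB : B →+ B) (φ : A →+* B) : Prop where
  map_mem : ∀ (i : ℤ), ∀ x ∈ 𝒜 i, φ x ∈ 𝒝 i
  map_d : ∀ x, φ (dA x) = dB (φ x)

/-- Graded commutativity: `a * b = (-1)^{|a||b|} b * a` for homogeneous elements. -/
def IsGradedComm (𝒜 : ℤ → AddSubgroup A) : Prop :=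
  ∀ (i j : ℤ) (a b : A), a ∈ 𝒜 i → b ∈ 𝒜 j →
    a * b = ((Int.negOnePow (i * j) : ℤ)) • (b * a)

/-- A dg-ring is acyclic if its homology vanishes, i.e. every cycle is a boundary. -/
def IsAcyclic (d : A →+ A) : Prop := ∀ x, d x = 0 → ∃ y, d y = x

/-- A dg left ideal: a graded additive subgroup closed under the differential and
under left multiplication. -/
def IsDGLeftIdeal (𝒜 : ℤ → AddSubgroup A) [GradedRing 𝒜] (d : A →+ A)
    (I : AddSubgroup A) : Prop :=
  (∀ (a : A), ∀ x ∈ I, a * x ∈ I) ∧ (∀ x ∈ I, d x ∈ I) ∧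
    (∀ x ∈ I, ∀ i : ℤ, (DirectSum.decompose 𝒜 x i : A) ∈ I)

/-- A dg right ideal. -/
def IsDGRightIdeal (𝒜 : ℤ → AddSubgroup A) [GradedRing 𝒜] (d : A →+ A)
    (I : AddSubgroup A) : Prop :=
  (∀ (a : A), ∀ x ∈ I, x * a ∈ I) ∧ (∀ x ∈ I, d x ∈ I) ∧
    (∀ x ∈ I, ∀ i : ℤ, (DirectSum.decompose 𝒜 x i : A) ∈ I)

/-- A dg-division ring: the only dg left ideals and the only dg right ideals
are `0` and the whole ring. -/
def IsDGDivisionRing (𝒜 : ℤ → AddSubgroup A) [GradedRing 𝒜] (d : A →+ A) : Prop :=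
  (0 : A) ≠ 1 ∧ (∀ I, IsDGLeftIdeal 𝒜 d I → I = ⊥ ∨ I = ⊤) ∧
    (∀ I, IsDGRightIdeal 𝒜 d I → I = ⊥ ∨ I = ⊤)

/-- A graded division ring (gr-field): every nonzero homogeneous element is invertible. -/
def IsGradedDivisionRing (𝒜 : ℤ → AddSubgroup A) : Prop :=
  (0 : A) ≠ 1 ∧ ∀ (i : ℤ) (x : A), x ∈ 𝒜 i → x ≠ 0 → IsUnit x

/-- The relations defining `B ⊗[A] B` inside `B ⊗[ℤ] B`, for an extension `φ : A →+* B`. -/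
def sepRel (φ : A →+* B) : Submodule ℤ (B ⊗[ℤ] B) :=
  Submodule.span ℤ {x | ∃ (b b' : B) (a : A),
    x = (b * φ a) ⊗ₜ[ℤ] b' - b ⊗ₜ[ℤ] (φ a * b')}

/-- The balanced tensor product `B ⊗[A] B` for an extension `φ : A →+* B`. -/
abbrev SepTensor (φ : A →+* B) := (B ⊗[ℤ] B) ⧸ sepRel φ

/-- The canonical projection `B ⊗[ℤ] B → B ⊗[A] B`. -/
noncomputable def sepMk (φ : A →+* B) : B ⊗[ℤ] B →ₗ[ℤ] SepTensor φ := (sepRel φ).mkQ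

/-- The multiplication map `μ : B ⊗[A] B → B`. -/
noncomputable def sepMul (φ : A →+* B) : SepTensor φ →ₗ[ℤ] B :=
  Submodule.liftQ _ (TensorProduct.lift (LinearMap.mul ℤ B)) (by
    rw [sepRel, Submodule.span_le]
    rintro x ⟨b, b', a, rfl⟩
    change TensorProduct.lift (LinearMap.mul ℤ B) ((b * φ a) ⊗ₜ[ℤ] b' - b ⊗ₜ[ℤ] (φ a * b')) = 0
    simp [mul_assoc])

/-- Left multiplication by `b` on `B ⊗[A] B`. -/
noncomputable def sepLMul (φ : A →+* B) (b : B) : SepTensor φ →ₗ[ℤ] SepTensor φ :=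
  Submodule.mapQ _ _ (TensorProduct.map (LinearMap.mulLeft ℤ b) LinearMap.id) (by
    rw [sepRel, Submodule.span_le]
    rintro x ⟨b₀, b', a, rfl⟩
    change TensorProduct.map (LinearMap.mulLeft ℤ b) LinearMap.id
      ((b₀ * φ a) ⊗ₜ[ℤ] b' - b₀ ⊗ₜ[ℤ] (φ a * b')) ∈ sepRel φ
    simp only [map_sub, TensorProduct.map_tmul,
      LinearMap.mulLeft_apply, LinearMap.id_apply]
    exact Submodule.subset_span ⟨b * b₀, b', a, by rw [mul_assoc]⟩)

/-- Right multiplication by `b` on `B ⊗[A] B`. -/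
noncomputable def sepRMul (φ : A →+* B) (b : B) : SepTensor φ →ₗ[ℤ] SepTensor φ :=
  Submodule.mapQ _ _ (TensorProduct.map LinearMap.id (LinearMap.mulRight ℤ b)) (by
    rw [sepRel, Submodule.span_le]
    rintro x ⟨b₀, b', a, rfl⟩
    change TensorProduct.map LinearMap.id (LinearMap.mulRight ℤ b)
      ((b₀ * φ a) ⊗ₜ[ℤ] b' - b₀ ⊗ₜ[ℤ] (φ a * b')) ∈ sepRel φ
    simp only [map_sub, TensorProduct.map_tmul,
      LinearMap.mulRight_apply, LinearMap.id_apply]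
    exact Submodule.subset_span ⟨b₀, b' * b, a, by rw [mul_assoc]⟩)

/-- The grading on `B ⊗[A] B`: the degree `n` part is generated by the classes of
`b ⊗ b'` with `b, b'` homogeneous of degrees summing to `n`. -/
noncomputable def sepGrading (φ : A →+* B) (𝒝 : ℤ → AddSubgroup B) (n : ℤ) :
    AddSubgroup (SepTensor φ) :=
  AddSubgroup.closure {x | ∃ (i j : ℤ) (b b' : B), b ∈ 𝒝 i ∧ b' ∈ 𝒝 j ∧ i + j = n ∧
    x = sepMk φ (b ⊗ₜ[ℤ] b')}

/-- The sign involution `b ↦ (-1)^{|b|} b` of a graded ring. -/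
noncomputable def signMap (𝒝 : ℤ → AddSubgroup B) [GradedRing 𝒝] : B →+ B :=
  (DirectSum.toAddMonoid fun i =>
      (smulAddHom ℤ B ((Int.negOnePow i : ℤ))).comp (𝒝 i).subtype).comp
    (DirectSum.decomposeAddEquiv 𝒝).toAddMonoidHom

lemma signMap_of_mem (𝒝 : ℤ → AddSubgroup B) [GradedRing 𝒝] {i : ℤ} {x : B}
    (hx : x ∈ 𝒝 i) : signMap 𝒝 x = ((Int.negOnePow i : ℤ)) • x := by
  classical
  unfold signMap
  simp only [AddMonoidHom.comp_apply, AddEquiv.coe_toAddMonoidHom,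
    DirectSum.decomposeAddEquiv_apply, DirectSum.decompose_of_mem 𝒝 hx,
    DirectSum.toAddMonoid_of]
  rfl

/-- The differential `d ⊗ 1 + ε ⊗ d` on `B ⊗[ℤ] B` (with Koszul sign). -/
noncomputable def sepDiffPre (𝒝 : ℤ → AddSubgroup B) [GradedRing 𝒝] (dB : B →+ B) :
    B ⊗[ℤ] B →ₗ[ℤ] B ⊗[ℤ] B :=
  TensorProduct.map dB.toIntLinearMap LinearMap.id +
    TensorProduct.map (signMap 𝒝).toIntLinearMap dB.toIntLinearMap

/-- `D` is the differential induced on `B ⊗[A] B` by `d_B ⊗ 1 + ε ⊗ d_B`. -/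
def IsSepDiff (φ : A →+* B) (𝒝 : ℤ → AddSubgroup B) [GradedRing 𝒝] (dB : B →+ B)
    (D : SepTensor φ →+ SepTensor φ) : Prop :=
  ∀ x : B ⊗[ℤ] B, D (sepMk φ x) = sepMk φ (sepDiffPre 𝒝 dB x)

/-- `ρ : B → B ⊗[A] B` is a `B`-`B`-bimodule section of the multiplication map. -/
def IsSepSection (φ : A →+* B) (ρ : B →+ SepTensor φ) : Prop :=
  (∀ b, sepMul φ (ρ b) = b) ∧
    (∀ (b₁ c b₂ : B), ρ (b₁ * c * b₂) = sepLMul φ b₁ (sepRMul φ b₂ (ρ c)))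

/-- The extension `φ : A →+* B` is separable: the multiplication map
`B ⊗[A] B → B` splits as a bimodule map. -/
def IsSeparableExt (φ : A →+* B) : Prop := ∃ ρ : B →+ SepTensor φ, IsSepSection φ ρ

/-- The extension `φ : A →+* B` of graded rings is graded-separable: the multiplication
map `B ⊗[A] B → B` splits as a map of graded bimodules. -/
def IsGrSeparable (φ : A →+* B) (𝒝 : ℤ → AddSubgroup B) : Prop :=
  ∃ ρ : B →+ SepTensor φ, IsSepSection φ ρ ∧
    ∀ (n : ℤ), ∀ b ∈ 𝒝 n, ρ b ∈ sepGrading φ 𝒝 n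

/-- The dg-extension `φ : (A,d_A) →  (B,d_B)` is dg-separable: the multiplication map
`B ⊗[A] B → B` splits as a map of differential graded bimodules. -/
def IsDGSeparable (φ : A →+* B) (𝒝 : ℤ → AddSubgroup B) [GradedRing 𝒝]
    (dB : B →+ B) : Prop :=
  ∃ D : SepTensor φ →+ SepTensor φ, IsSepDiff φ 𝒝 dB D ∧
    ∃ ρ : B →+ SepTensor φ, IsSepSection φ ρ ∧
      (∀ (n : ℤ), ∀ b ∈ 𝒝 n, ρ b ∈ sepGrading φ 𝒝 n) ∧
      (∀ b, D (ρ b) = ρ (dB b))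

end DGCore

/-- The grading of the dual numbers `A = K[X]/(X²)` with `X = ε` in degree `-1`. -/
noncomputable def dnGrading (K : Type) [Field K] : ℤ → AddSubgroup (DualNumber K) :=
  fun n =>
    if n = 0 then AddSubgroup.closure {x | ∃ a : K, x = TrivSqZeroExt.inl a}
    else if n = -1 then AddSubgroup.closure {x | ∃ a : K, x = TrivSqZeroExt.inr a}
    else ⊥

section SepTensor

variable {A : Type} [Ring A] {B : Type} [Ring B] (φ : A →+* B)

theorem sepMul_sepMk (t : B ⊗[ℤ] B) :
    sepMul φ (sepMk φ t) = TensorProduct.lift (LinearMap.mul ℤ B) t :=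
  rfl

theorem sepLMul_sepMk (b : B) (t : B ⊗[ℤ] B) :
    sepLMul φ b (sepMk φ t) =
      sepMk φ (TensorProduct.map (LinearMap.mulLeft ℤ b) LinearMap.id t) :=
  rfl

theorem sepRMul_sepMk (b : B) (t : B ⊗[ℤ] B) :
    sepRMul φ b (sepMk φ t) =
      sepMk φ (TensorProduct.map LinearMap.id (LinearMap.mulRight ℤ b) t) :=
  rfl

theorem sepMk_surjective : Function.Surjective (sepMk φ) :=
  Submodule.mkQ_surjective _

end SepTensor

namespace DualNumber

open TrivSqZeroExt

variable (R : Type) [CommRing R]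

noncomputable def coeffEpsTmulOne : R[ε] ⊗[ℤ] R[ε] →ₗ[ℤ] R :=
  TensorProduct.lift <| LinearMap.mk₂ ℤ (fun b b' => b.snd * b'.fst)
    (fun _ _ _ => by simp [add_mul]) (fun _ _ _ => by simp [mul_assoc])
    (fun _ _ _ => by simp [mul_add]) (fun _ _ _ => by simp [mul_left_comm])

@[simp]
theorem coeffEpsTmulOne_tmul (b b' : R[ε]) :
    coeffEpsTmulOne R (b ⊗ₜ b') = b.snd * b'.fst :=
  rfl

theorem sepRel_le_ker_coeffEpsTmulOne :
    sepRel (algebraMap R R[ε]) ≤ LinearMap.ker (coeffEpsTmulOne R) := by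
  rw [sepRel, Submodule.span_le]
  rintro _ ⟨b, b', a, rfl⟩
  simp [algebraMap_eq_inl, mul_assoc]

noncomputable def sepCoeffEpsTmulOne : SepTensor (algebraMap R R[ε]) →ₗ[ℤ] R :=
  (sepRel _).liftQ _ (sepRel_le_ker_coeffEpsTmulOne R)

@[simp]
theorem sepCoeffEpsTmulOne_sepMk (t : R[ε] ⊗[ℤ] R[ε]) :
    sepCoeffEpsTmulOne R (sepMk _ t) = coeffEpsTmulOne R t :=
  rfl

variable {R}

theorem sepCoeffEpsTmulOne_eps_mul_sub_mul_eps (ω : SepTensor (algebraMap R R[ε])) :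
    sepCoeffEpsTmulOne R (sepLMul _ ε ω) - sepCoeffEpsTmulOne R (sepRMul _ ε ω) =
      (sepMul _ ω).fst := by
  obtain ⟨t, rfl⟩ := sepMk_surjective _ ω
  induction t using TensorProduct.induction_on with
  | zero => simp
  | tmul b b' => simp [sepLMul_sepMk, sepRMul_sepMk, sepMul_sepMk]
  | add x y hx hy =>
    simp only [map_add, fst_add] at hx hy ⊢
    linear_combination hx + hy

theorem not_exists_eps_comm_sepMul_eq_one [Nontrivial R] :
    ¬ ∃ ω : SepTensor (algebraMap R R[ε]),
        sepLMul _ ε ω = sepRMul _ ε ω ∧ sepMul _ ω = 1 := by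
  rintro ⟨ω, hcomm, hmul⟩
  have h := sepCoeffEpsTmulOne_eps_mul_sub_mul_eps ω
  rw [hcomm, sub_self, hmul, fst_one] at h
  exact zero_ne_one h

end DualNumber

theorem dualNumbers_extension_not_dgSeparable_general
    {K : Type} [Field K] :
    ¬ ∃ ω : SepTensor (algebraMap K (DualNumber K)),
        ω ∈ sepGrading (algebraMap K (DualNumber K)) (dnGrading K) 0 ∧
        sepLMul (algebraMap K (DualNumber K)) DualNumber.eps ω =
          sepRMul (algebraMap K (DualNumber K)) DualNumber.eps ω ∧
        sepMul (algebraMap K (DualNumber K)) ω = 1 := by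
  rintro ⟨ω, -, h⟩
  exact DualNumber.not_exists_eps_comm_sepMul_eq_one ⟨ω, h⟩

/-- For a field `K` of characteristic different from `2` and
`A = K[X]/(X²)` with `X` of degree `-1` and `d X = 1`, the extension `(K,0) → (A,d)`
is not dg-separable: there is no degree-`0` element `ω` of `A ⊗[K] A` commuting with
`X` and mapping to `1` under the multiplication map. -/
theorem dualNumbers_extension_not_dgSeparable
    {K : Type} [Field K] (hchar : (2 : K) ≠ 0)
    (d : DualNumber K →+ DualNumber K)
    (hd : ∀ x : DualNumber K, d x = TrivSqZeroExt.inl (TrivSqZeroExt.snd x)) :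
    ¬ ∃ ω : SepTensor (algebraMap K (DualNumber K)),
        ω ∈ sepGrading (algebraMap K (DualNumber K)) (dnGrading K) 0 ∧
        sepLMul (algebraMap K (DualNumber K)) DualNumber.eps ω =
          sepRMul (algebraMap K (DualNumber K)) DualNumber.eps ω ∧
        sepMul (algebraMap K (DualNumber K)) ω = 1 :=
  dualNumbers_extension_not_dgSeparable_general
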